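/- Let ζ :⊆ Y ⇉ ℕ^ℕ be a probe for a represented space Y and let T :⊆ X ⇉ Y be a partial multivalued function. Suppose the class C of all partial multivalued functions f between represented spaces for which player II has a winning strategy in the (ζ, T)-Wadge game for f is closed downwards under ≤_W^c. Then C = {f : f ≤_W^c ζ ∘ T}, and ζ ∘ T is a cylinder and is transparent. -/

import Mathlib

open Filter Topology

/-! ### Partial functions on Baire space -/

/-- A partial function on Baire space, given by a domain and an underlying total
function (whose values outside the domain are irrelevant). -/
structure PFunB where
  dom : Set (ℕ → ℕ)
  toFun : (ℕ → ℕ) → (ℕ → ℕ)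

/-- A partial function on Baire space is continuous if its underlying function is
continuous on its domain. -/
def PFunB.IsContinuous (F : PFunB) : Prop := ContinuousOn F.toFun F.dom

/-- Composition of partial functions on Baire space. -/
def PFunB.comp (F G : PFunB) : PFunB where
  dom := {p | p ∈ G.dom ∧ G.toFun p ∈ F.dom}
  toFun := fun p => F.toFun (G.toFun p)

/-- A partial function from (Baire space) × (Baire space) to Baire space. -/
structure PFunB2 where
  dom : Set ((ℕ → ℕ) × (ℕ → ℕ))
  toFun : (ℕ → ℕ) × (ℕ → ℕ) → (ℕ → ℕ)

def PFunB2.IsContinuous (K : PFunB2) : Prop := ContinuousOn K.toFun K.dom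

/-! ### Coding of sequences -/

/-- The `n`-th column of `p : ℕ → ℕ`, via the standard pairing bijection. -/
def col (p : ℕ → ℕ) (n : ℕ) : ℕ → ℕ := fun k => p (Nat.pair n k)

/-- Interleaving pairing of two elements of Baire space. -/
def pairB (p q : ℕ → ℕ) : ℕ → ℕ := fun n => if n % 2 = 0 then p (n / 2) else q (n / 2)

def leftB (r : ℕ → ℕ) : ℕ → ℕ := fun n => r (2 * n)

def rightB (r : ℕ → ℕ) : ℕ → ℕ := fun n => r (2 * n + 1)

theorem leftB_pairB (p q : ℕ → ℕ) : leftB (pairB p q) = p := by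
  funext n
  show (if (2 * n) % 2 = 0 then p ((2 * n) / 2) else q ((2 * n) / 2)) = p n
  rw [if_pos (by omega)]
  congr 1
  omega

theorem rightB_pairB (p q : ℕ → ℕ) : rightB (pairB p q) = q := by
  funext n
  show (if (2 * n + 1) % 2 = 0 then p ((2 * n + 1) / 2) else q ((2 * n + 1) / 2)) = q n
  rw [if_neg (by omega)]
  congr 1
  omega

/-! ### Represented spaces -/

/-- A represented space: a set `X` together with a partial surjection from Baire space
onto `X` (modelled as a total map together with a domain, such that every point has a
name in the domain). -/
structure RepSpace (X : Type u) where
  dom : Set (ℕ → ℕ)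
  map : (ℕ → ℕ) → X
  surj : ∀ x : X, ∃ p ∈ dom, map p = x

/-- Baire space with the identity representation. -/
def idRep : RepSpace (ℕ → ℕ) := ⟨Set.univ, id, fun x => ⟨x, trivial, rfl⟩⟩

/-- The representation of `X`, viewed as a partial multivalued function from Baire
space to `X` (with empty value outside the domain). -/
def RepSpace.toMV {X : Type u} (δ : RepSpace X) : (ℕ → ℕ) → Set X :=
  fun p => {x | p ∈ δ.dom ∧ δ.map p = x}

/-- Product of represented spaces, via the interleaving pairing homeomorphism. -/
def RepSpace.prod {X : Type u} {Y : Type v} (δX : RepSpace X) (δY : RepSpace Y) :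
    RepSpace (X × Y) where
  dom := {r | leftB r ∈ δX.dom ∧ rightB r ∈ δY.dom}
  map := fun r => (δX.map (leftB r), δY.map (rightB r))
  surj := by
    rintro ⟨x, y⟩
    obtain ⟨p, hp, hpx⟩ := δX.surj x
    obtain ⟨q, hq, hqy⟩ := δY.surj y
    refine ⟨pairB p q, ⟨?_, ?_⟩, ?_⟩
    · rw [leftB_pairB]; exact hp
    · rw [rightB_pairB]; exact hq
    · show (δX.map (leftB (pairB p q)), δY.map (rightB (pairB p q))) = (x, y)
      rw [leftB_pairB, rightB_pairB, hpx, hqy]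

/-- The represented space of sequences in `X`: `δ(p) = (δ_X((p)_n))_n`. -/
def RepSpace.seq {X : Type u} (δ : RepSpace X) : RepSpace (ℕ → X) where
  dom := {p | ∀ n, col p n ∈ δ.dom}
  map := fun p n => δ.map (col p n)
  surj := by
    intro x
    choose q hq hmap using fun n => δ.surj (x n)
    have hcol : ∀ n, col (fun m => q (Nat.unpair m).1 (Nat.unpair m).2) n = q n := by
      intro n; funext k; simp [col]
    refine ⟨fun m => q (Nat.unpair m).1 (Nat.unpair m).2, fun n => ?_, ?_⟩
    · rw [hcol]; exact hq n
    · funext n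
      show δ.map (col (fun m => q (Nat.unpair m).1 (Nat.unpair m).2) n) = x n
      rw [hcol]; exact hmap n

/-! ### Partial multivalued functions -/

/-- Composition of partial multivalued functions (with the domain convention
`dom (f ∘ g) = {x ∈ dom g : g x ⊆ dom f}`; a partial multivalued function is modelled
as a `Set`-valued function whose domain is the set of points with nonempty value). -/
def MComp {X : Type u} {Y : Type v} {Z : Type w} (f : Y → Set Z) (g : X → Set Y) :
    X → Set Z :=
  fun x => {z | (∀ y ∈ g x, (f y).Nonempty) ∧ ∃ y ∈ g x, z ∈ f y}

/-- `f` tightens `g`: `dom g ⊆ dom f` and `f x ⊆ g x` for every `x ∈ dom g`. -/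
def Tightens {X : Type u} {Y : Type v} (f g : X → Set Y) : Prop :=
  ∀ x, (g x).Nonempty → (f x).Nonempty ∧ f x ⊆ g x

/-- `F` is a realizer of the partial multivalued function `f`. -/
def Realizes {X : Type u} {Y : Type v} (δX : RepSpace X) (δY : RepSpace Y)
    (F : PFunB) (f : X → Set Y) : Prop :=
  ∀ p ∈ δX.dom, (f (δX.map p)).Nonempty →
    p ∈ F.dom ∧ F.toFun p ∈ δY.dom ∧ δY.map (F.toFun p) ∈ f (δX.map p)

/-- A partial multivalued function between represented spaces is continuous if it has a
continuous realizer. -/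
def MCts {X : Type u} {Y : Type v} (δX : RepSpace X) (δY : RepSpace Y)
    (f : X → Set Y) : Prop :=
  ∃ F : PFunB, F.IsContinuous ∧ Realizes δX δY F f

/-- Strong continuous Weihrauch reducibility `f ≤_sW^c g`. -/
def StrongWc {A : Type u} {B : Type v} {C : Type w} {D : Type x}
    (δA : RepSpace A) (δB : RepSpace B) (δC : RepSpace C) (δD : RepSpace D)
    (f : A → Set B) (g : C → Set D) : Prop :=
  ∃ K H : PFunB, K.IsContinuous ∧ H.IsContinuous ∧
    ∀ G : PFunB, Realizes δC δD G g → Realizes δA δB (K.comp (G.comp H)) f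

/-- Continuous Weihrauch reducibility `f ≤_W^c g`. -/
def Wc {A : Type u} {B : Type v} {C : Type w} {D : Type x}
    (δA : RepSpace A) (δB : RepSpace B) (δC : RepSpace C) (δD : RepSpace D)
    (f : A → Set B) (g : C → Set D) : Prop :=
  ∃ (K : PFunB2) (H : PFunB), K.IsContinuous ∧ H.IsContinuous ∧
    ∀ G : PFunB, Realizes δC δD G g →
      Realizes δA δB
        ⟨{p | p ∈ H.dom ∧ H.toFun p ∈ G.dom ∧ (p, G.toFun (H.toFun p)) ∈ K.dom},
          fun p => K.toFun (p, G.toFun (H.toFun p))⟩ f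

/-- Continuous Weihrauch equivalence `f ≡_W^c g`. -/
def WcEquiv {A : Type u} {B : Type v} {C : Type w} {D : Type x}
    (δA : RepSpace A) (δB : RepSpace B) (δC : RepSpace C) (δD : RepSpace D)
    (f : A → Set B) (g : C → Set D) : Prop :=
  Wc δA δB δC δD f g ∧ Wc δC δD δA δB g f

/-- `id_{ℕ^ℕ} × g` for a partial multivalued `g`. -/
def idProd {C : Type u} {D : Type v} (g : C → Set D) :
    (ℕ → ℕ) × C → Set ((ℕ → ℕ) × D) :=
  fun pc => {qd | qd.1 = pc.1 ∧ qd.2 ∈ g pc.2}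

/-- `f` is a cylinder if `id_{ℕ^ℕ} × f ≤_sW^c f`. -/
def IsCylinder {X : Type u} {Y : Type v} (δX : RepSpace X) (δY : RepSpace Y)
    (f : X → Set Y) : Prop :=
  StrongWc (idRep.prod δX) (idRep.prod δY) δX δY (idProd f) f

/-- `T :⊆ X ⇉ Y` is transparent: for every continuous `g :⊆ Y ⇉ Y` there is a
continuous `f :⊆ X ⇉ X` with `T ∘ f ⪯ g ∘ T`. -/
def Transparent {X : Type u} {Y : Type v} (δX : RepSpace X) (δY : RepSpace Y)
    (T : X → Set Y) : Prop :=
  ∀ g : Y → Set Y, MCts δY δY g →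
    ∃ f : X → Set X, MCts δX δX f ∧ Tightens (MComp T f) (MComp g T)

/-- `ζ :⊆ Y ⇉ ℕ^ℕ` is a probe for `Y`: it is continuous, and for every continuous
`f :⊆ Y ⇉ ℕ^ℕ` there is a continuous `e :⊆ Y ⇉ Y` with `ζ ∘ e ⪯ f`. -/
def IsProbe {Y : Type u} (δY : RepSpace Y) (ζ : Y → Set (ℕ → ℕ)) : Prop :=
  MCts δY idRep ζ ∧
    ∀ f : Y → Set (ℕ → ℕ), MCts δY idRep f →
      ∃ e : Y → Set Y, MCts δY δY e ∧ Tightens (MComp ζ e) f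

/-- Parallelization of a partial multivalued function. -/
def Parallel {X : Type u} {Y : Type v} (f : X → Set Y) : (ℕ → X) → Set (ℕ → Y) :=
  fun xs => {ys | ∀ n, ys n ∈ f (xs n)}

/-! ### Games -/

/-- A strategy for player II: to each finite sequence of I's moves it assigns a natural
number or a pass (`none`). -/
abbrev Strategy := List ℕ → Option ℕ

/-- The move of player II (following `σ`) after I has played `x 0, …, x n`. -/
def respond (σ : Strategy) (x : ℕ → ℕ) (n : ℕ) : Option ℕ :=
  σ (List.ofFn fun i : Fin (n + 1) => x i)

/-- Player II plays natural numbers at infinitely many rounds of the run against `x`. -/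
def InfPlays (σ : Strategy) (x : ℕ → ℕ) : Prop :=
  {n | (respond σ x n).isSome = true}.Infinite

/-- The element of Baire space built by player II in the run against `x`
(the subsequence of her non-pass moves). -/
noncomputable def output (σ : Strategy) (x : ℕ → ℕ) : ℕ → ℕ :=
  fun k => (respond σ x (Nat.nth (fun n => (respond σ x n).isSome = true) k)).getD 0

/-- The partial multivalued function `δ_B ∘ ζ ∘ T ∘ δ_X :⊆ ℕ^ℕ ⇉ B` used in the winning
condition of the `(ζ, T)`-Wadge game. -/
def GameMap {X : Type u} {Y : Type v} {B : Type w} (δX : RepSpace X) (δB : RepSpace B)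
    (ζ : Y → Set (ℕ → ℕ)) (T : X → Set Y) : (ℕ → ℕ) → Set B :=
  MComp δB.toMV (MComp ζ (MComp T δX.toMV))

/-- `σ` is a winning strategy for player II in the `(ζ, T)`-Wadge game for `f`:
for every run `x` built by player I with `x ∈ dom (f ∘ δ_A)`, player II plays natural
numbers infinitely often, her output `y` lies in `dom (δ_B ∘ ζ ∘ T ∘ δ_X)`, and
`(δ_B ∘ ζ ∘ T ∘ δ_X)(y) ⊆ (f ∘ δ_A)(x)` (runs with `x ∉ dom (f ∘ δ_A)` are won by II
automatically). -/
def WadgeWinning {X : Type u} {Y : Type v} {A : Type w} {B : Type x}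
    (δX : RepSpace X) (δA : RepSpace A) (δB : RepSpace B)
    (ζ : Y → Set (ℕ → ℕ)) (T : X → Set Y) (f : A → Set B) (σ : Strategy) : Prop :=
  ∀ x : ℕ → ℕ, (MComp f δA.toMV x).Nonempty →
    InfPlays σ x ∧
    (GameMap δX δB ζ T (output σ x)).Nonempty ∧
    GameMap δX δB ζ T (output σ x) ⊆ MComp f δA.toMV x

/-! ### lim, isFinite and the Baire hierarchy -/

/-- The partial function `lim :⊆ ℕ^ℕ → ℕ^ℕ`, `lim(p) = lim_n (p)_n` (pointwise limit),
viewed as a partial multivalued function with singleton values on its domain. -/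
def limFn : (ℕ → ℕ) → Set (ℕ → ℕ) :=
  fun p => {q | ∀ k, ∀ᶠ n in atTop, col p n k = q k}

/-- The space `{0,1}^ℕ` of binary sequences. -/
abbrev BSeq : Type := {p : ℕ → ℕ // ∀ n, p n ≤ 1}

/-- `{0,1}^ℕ` with the identity representation (as a subspace of Baire space). -/
def repBSeq : RepSpace BSeq where
  dom := {p | ∀ n, p n ≤ 1}
  map := fun p => ⟨fun n => min (p n) 1, fun _ => min_le_right _ _⟩
  surj := fun x => ⟨x.1, x.2, Subtype.ext (funext fun n => min_eq_left (x.2 n))⟩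

/-- The two-point space `{0,1}`. -/
abbrev TwoPt : Type := {n : ℕ // n ≤ 1}

/-- The two-point space `{0,1}` represented by `δ(p) = p 0`. -/
def repTwo : RepSpace TwoPt where
  dom := {p | p 0 ≤ 1}
  map := fun p => ⟨min (p 0) 1, min_le_right _ _⟩
  surj := fun x => ⟨fun _ => x.1, x.2, Subtype.ext (min_eq_left x.2)⟩

open Classical in
/-- `isFinite(p) = 1` iff `{n : p n = 1}` is finite. -/
noncomputable def isFinite : BSeq → TwoPt :=
  fun p => if {n | p.1 n = 1}.Finite then ⟨1, le_refl 1⟩ else ⟨0, Nat.zero_le 1⟩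

/-- The finite levels of the Baire hierarchy: Baire class 0 functions are the continuous
ones, and Baire class `n+1` functions are pointwise limits of sequences of Baire class
`n` functions. -/
def BaireClass : ℕ → ((ℕ → ℕ) → (ℕ → ℕ)) → Prop
  | 0, f => Continuous f
  | n + 1, f => ∃ g : ℕ → (ℕ → ℕ) → (ℕ → ℕ),
      (∀ k, BaireClass n (g k)) ∧ ∀ x, Tendsto (fun k => g k x) atTop (𝓝 (f x))


/-! Copying I's moves wins the game for `ζ ∘ T` itself, so downward closure puts the whole
lower cone of `ζ ∘ T` into the class. Conversely, II's output digits depend on finitely many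
of I's moves, so a winning strategy is a continuous map on names sending a name of `x` to a
point at which every value of `ζ ∘ T` names a solution for `x`: a strong reduction to `ζ ∘ T`
with trivial outer map. Applied to `id × (ζ ∘ T)` and to `g ∘ (ζ ∘ T)` with `g` continuous,
both of which reduce to `ζ ∘ T`, this gives the cylinder property and transparency. -/

section MComp

variable {W X Y Z : Type*}

theorem mcomp_assoc (f : Y → Set Z) (g : X → Set Y) (h : W → Set X) :
    MComp f (MComp g h) = MComp (MComp f g) h := by
  funext w
  ext z
  simp only [MComp, Set.Nonempty]
  constructor
  · rintro ⟨hf, y, ⟨hg, x, hx, hy⟩, hz⟩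
    have hmem : ∀ x' ∈ h w, ∀ y' ∈ g x', (∀ x ∈ h w, ∃ y, y ∈ g x) ∧ ∃ x ∈ h w, y' ∈ g x :=
      fun x' hx' y' hy' => ⟨hg, x', hx', hy'⟩
    refine ⟨fun x' hx' => ?_, x, hx, fun y' hy' => hf y' (hmem x hx y' hy'), y, hy, hz⟩
    obtain ⟨y', hy'⟩ := hg x' hx'
    obtain ⟨z', hz'⟩ := hf y' (hmem x' hx' y' hy')
    exact ⟨z', fun y'' hy'' => hf y'' (hmem x' hx' y'' hy''), y', hy', hz'⟩
  · rintro ⟨hfg, x, hx, -, y, hy, hz⟩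
    refine ⟨?_, y, ⟨fun x' hx' => ?_, x, hx, hy⟩, hz⟩
    · rintro y' ⟨-, x', hx', hy'⟩
      obtain ⟨-, hall, -⟩ := hfg x' hx'
      exact hall y' hy'
    · obtain ⟨-, -, y', hy', -⟩ := hfg x' hx'
      exact ⟨y', hy'⟩

theorem nonempty_mcomp_iff {f : Y → Set Z} {g : X → Set Y} {x : X} :
    (MComp f g x).Nonempty ↔ (g x).Nonempty ∧ ∀ y ∈ g x, (f y).Nonempty := by
  constructor
  · rintro ⟨z, hall, y, hy, -⟩
    exact ⟨⟨y, hy⟩, hall⟩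
  · rintro ⟨⟨y, hy⟩, hall⟩
    obtain ⟨z, hz⟩ := hall y hy
    exact ⟨z, hall, y, hy, hz⟩

theorem RepSpace.nonempty_toMV_iff {δ : RepSpace X} {p : ℕ → ℕ} :
    (δ.toMV p).Nonempty ↔ p ∈ δ.dom :=
  ⟨fun ⟨_, hp, _⟩ => hp, fun hp => ⟨δ.map p, hp, rfl⟩⟩

theorem RepSpace.mcomp_toMV_of_mem {δ : RepSpace X} (h : X → Set Z) {p : ℕ → ℕ}
    (hp : p ∈ δ.dom) : MComp h δ.toMV p = h (δ.map p) := by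
  ext z
  constructor
  · rintro ⟨-, _, ⟨-, rfl⟩, hz⟩
    exact hz
  · intro hz
    exact ⟨fun _ hy => hy.2 ▸ ⟨z, hz⟩, δ.map p, ⟨hp, rfl⟩, hz⟩

theorem RepSpace.mem_dom_of_nonempty_mcomp_toMV {δ : RepSpace X} {h : X → Set Z}
    {p : ℕ → ℕ} (hne : (MComp h δ.toMV p).Nonempty) : p ∈ δ.dom :=
  have ⟨_, _, _, hy, _⟩ := hne
  hy.1

theorem idRep_toMV_mcomp (h : X → Set (ℕ → ℕ)) : MComp idRep.toMV h = h := by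
  funext x
  ext z
  exact ⟨fun ⟨_, _, hq, _, hqz⟩ => hqz ▸ hq,
    fun hz => ⟨fun q _ => ⟨q, trivial, rfl⟩, z, hz, trivial, rfl⟩⟩

end MComp

section Reductions

variable {A B C D E : Type*} {δA : RepSpace A} {δB : RepSpace B} {δC : RepSpace C}
  {δD : RepSpace D} {δE : RepSpace E}

theorem StrongWc.wc {f : A → Set B} {g : C → Set D} (h : StrongWc δA δB δC δD f g) :
    Wc δA δB δC δD f g := by
  obtain ⟨K, H, hK, hH, hKGH⟩ := h
  refine ⟨⟨{pq | pq.2 ∈ K.dom}, fun pq => K.toFun pq.2⟩, H,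
    hK.comp continuous_snd.continuousOn fun _ h => h, hH, fun G hG p hp hf => ?_⟩
  obtain ⟨⟨⟨hpH, hHG⟩, hGK⟩, hrest⟩ := hKGH G hG p hp hf
  exact ⟨⟨hpH, hHG, hGK⟩, hrest⟩

theorem strongWc_mcomp_of_mcts {S : C → Set D} {g : D → Set E} (hg : MCts δD δE g) :
    StrongWc δC δE δC δD (MComp g S) S := by
  obtain ⟨Gg, hGgc, hGg⟩ := hg
  refine ⟨Gg, ⟨Set.univ, id⟩, hGgc, continuousOn_id, fun G hG p hp hf => ?_⟩
  obtain ⟨hSne, hgne⟩ := nonempty_mcomp_iff.mp hf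
  obtain ⟨hpG, hGD, hGS⟩ := hG p hp hSne
  obtain ⟨hGGg, hGgE, hGgg⟩ := hGg _ hGD (hgne _ hGS)
  exact ⟨⟨⟨trivial, hpG⟩, hGGg⟩, hGgE, hgne, _, hGS, hGgg⟩

theorem continuous_leftB : Continuous leftB :=
  continuous_pi fun n => continuous_apply (2 * n)

theorem continuous_rightB : Continuous rightB :=
  continuous_pi fun n => continuous_apply (2 * n + 1)

theorem continuous_pairB : Continuous fun pq : (ℕ → ℕ) × (ℕ → ℕ) => pairB pq.1 pq.2 := by
  refine continuous_pi fun n => ?_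
  by_cases hn : n % 2 = 0 <;> simp only [pairB, hn, if_true, if_false] <;> fun_prop

theorem wc_idProd (δC : RepSpace C) (δD : RepSpace D) (g : C → Set D) :
    Wc (idRep.prod δC) (idRep.prod δD) δC δD (idProd g) g := by
  refine ⟨⟨Set.univ, fun rq => pairB (leftB rq.1) rq.2⟩, ⟨Set.univ, rightB⟩,
    (continuous_pairB.comp ((continuous_leftB.comp continuous_fst).prodMk
      continuous_snd)).continuousOn, continuous_rightB.continuousOn,
    fun G hG r ⟨_, hr⟩ ⟨_, _, hg⟩ => ?_⟩
  obtain ⟨hrG, hGD, hGg⟩ := hG _ hr ⟨_, hg⟩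
  refine ⟨⟨trivial, hrG, trivial⟩, ⟨trivial, ?_⟩, ?_, ?_⟩
  · rw [rightB_pairB]; exact hGD
  · exact congrArg id (leftB_pairB _ _)
  · show δD.map (rightB (pairB _ _)) ∈ _
    rw [rightB_pairB]; exact hGg

end Reductions

section Strategy

variable (σ : Strategy) {x y : ℕ → ℕ}

theorem respond_eq_of_mem_cylinder {n : ℕ} (hy : y ∈ PiNat.cylinder x (n + 1)) :
    respond σ y n = respond σ x n := by
  unfold respond
  congr 2
  funext i
  exact hy i i.isLt

theorem output_eq_of_mem_cylinder (hx : InfPlays σ x) {k : ℕ}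
    (hy : y ∈ PiNat.cylinder x (Nat.nth (fun n => (respond σ x n).isSome = true) k + 1)) :
    output σ y k = output σ x k := by
  classical
  set N := Nat.nth (fun n => (respond σ x n).isSome = true) k
  have hresp : ∀ n ≤ N, respond σ y n = respond σ x n := fun n hn =>
    respond_eq_of_mem_cylinder σ (PiNat.cylinder_anti x (by omega) hy)
  have hcount : Nat.count (fun n => (respond σ y n).isSome = true) N = k := by
    calc Nat.count (fun n => (respond σ y n).isSome = true) N
        = Nat.count (fun n => (respond σ x n).isSome = true) N := by
          simp only [Nat.count_eq_card_filter_range]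
          exact congrArg Finset.card (Finset.filter_congr fun n hn => by
            rw [hresp n (Finset.mem_range.mp hn).le])
      _ = k := Nat.count_nth_of_infinite hx k
  have hnth : Nat.nth (fun n => (respond σ y n).isSome = true) k = N := by
    rw [← hcount]
    exact Nat.nth_count (by rw [hresp N le_rfl]; exact Nat.nth_mem_of_infinite hx k)
  simp only [output, hnth, hresp N le_rfl, N]

theorem continuousOn_output : ContinuousOn (output σ) {x | InfPlays σ x} := by
  intro x hx
  rw [ContinuousWithinAt, tendsto_pi_nhds]
  intro k
  refine tendsto_const_nhds.congr' ?_
  filter_upwards [nhdsWithin_le_nhds ((PiNat.isOpen_cylinder _ x _).mem_nhds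
    (PiNat.self_mem_cylinder x (Nat.nth (fun n => (respond σ x n).isSome = true) k + 1)))]
    with y hy
  exact (output_eq_of_mem_cylinder σ hx hy).symm

def copyStrat : Strategy := List.getLast?

theorem respond_copyStrat (x : ℕ → ℕ) (n : ℕ) : respond copyStrat x n = some (x n) := by
  rw [respond, copyStrat, List.getLast?_eq_some_getLast (by simp), List.getLast_ofFn]
  simp

theorem infPlays_copyStrat (x : ℕ → ℕ) : InfPlays copyStrat x := by
  simp [InfPlays, respond_copyStrat, Set.infinite_univ]

theorem output_copyStrat (x : ℕ → ℕ) : output copyStrat x = x := by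
  funext k
  simp [output, respond_copyStrat]

end Strategy

section Game

variable {X Y A B Z : Type*} (δX : RepSpace X) {δA : RepSpace A} (δB : RepSpace B)
  (ζ : Y → Set (ℕ → ℕ)) (T : X → Set Y)

theorem gameMap_eq : GameMap δX δB ζ T = MComp (MComp δB.toMV (MComp ζ T)) δX.toMV := by
  rw [GameMap, mcomp_assoc ζ T, mcomp_assoc]

theorem wadgeWinning_copyStrat :
    WadgeWinning δX δX δB ζ T (MComp δB.toMV (MComp ζ T)) copyStrat := by
  intro x hx
  rw [output_copyStrat, gameMap_eq]
  exact ⟨infPlays_copyStrat x, hx, subset_rfl⟩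

def RealizesRefinement (δA : RepSpace A) (H : PFunB) (S : X → Set Z) (f : A → Set Z) :
    Prop :=
  ∀ p ∈ δA.dom, (f (δA.map p)).Nonempty → p ∈ H.dom ∧ H.toFun p ∈ δX.dom ∧
    (S (δX.map (H.toFun p))).Nonempty ∧ S (δX.map (H.toFun p)) ⊆ f (δA.map p)

variable {δX δB}

theorem RealizesRefinement.strongWc {S : X → Set (ℕ → ℕ)} {f : A → Set B} {H : PFunB}
    (hH : H.IsContinuous) (h : RealizesRefinement δX δA H (MComp δB.toMV S) f) :
    StrongWc δA δB δX idRep f S := by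
  refine ⟨⟨Set.univ, id⟩, H, continuousOn_id, hH, fun G hG p hp hf => ?_⟩
  obtain ⟨hpH, hy, hne, hsub⟩ := h p hp hf
  obtain ⟨hSne, hB⟩ := nonempty_mcomp_iff.mp hne
  obtain ⟨hyG, -, hGy⟩ := hG _ hy hSne
  have hGB : G.toFun (H.toFun p) ∈ δB.dom := RepSpace.nonempty_toMV_iff.mp (hB _ hGy)
  exact ⟨⟨⟨hpH, hyG⟩, trivial⟩, hGB, hsub ⟨hB, _, hGy, hGB, rfl⟩⟩

theorem RealizesRefinement.exists_mcts_tightens {S g : X → Set Z} {H : PFunB}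
    (hH : H.IsContinuous) (h : RealizesRefinement δX δX H S g) :
    ∃ f : X → Set X, MCts δX δX f ∧ Tightens (MComp S f) g := by
  refine ⟨fun x => {x' | (S x').Nonempty ∧ S x' ⊆ g x},
    ⟨H, hH, fun p hp ⟨_, hS, hSg⟩ => ?_⟩, fun x hx => ?_⟩
  · obtain ⟨hpH, hHX, hne, hsub⟩ := h p hp (hS.mono hSg)
    exact ⟨hpH, hHX, hne, hsub⟩
  · obtain ⟨p, hp, rfl⟩ := δX.surj x
    obtain ⟨-, -, ⟨z, hz⟩, hsub⟩ := h p hp hx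
    exact ⟨⟨z, fun _ hx' => hx'.1, _, ⟨⟨z, hz⟩, hsub⟩, hz⟩, fun _ ⟨_, _, hx', hz⟩ => hx'.2 hz⟩

variable {ζ T}

theorem WadgeWinning.exists_realizesRefinement {f : A → Set B} {σ : Strategy}
    (hσ : WadgeWinning δX δA δB ζ T f σ) :
    ∃ H : PFunB, H.IsContinuous ∧
      RealizesRefinement δX δA H (MComp δB.toMV (MComp ζ T)) f := by
  refine ⟨⟨{p | (MComp f δA.toMV p).Nonempty}, output σ⟩,
    (continuousOn_output σ).mono fun p hp => (hσ p hp).1, fun p hp hf => ?_⟩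
  rw [← RepSpace.mcomp_toMV_of_mem f hp] at hf
  obtain ⟨-, hne, hsub⟩ := hσ p hf
  rw [gameMap_eq] at hne hsub
  have hy := RepSpace.mem_dom_of_nonempty_mcomp_toMV hne
  rw [RepSpace.mcomp_toMV_of_mem _ hy] at hne hsub
  rw [RepSpace.mcomp_toMV_of_mem _ hp] at hsub
  exact ⟨hf, hy, hne, hsub⟩

theorem WadgeWinning.strongWc {f : A → Set B} {σ : Strategy}
    (hσ : WadgeWinning δX δA δB ζ T f σ) : StrongWc δA δB δX idRep f (MComp ζ T) :=
  have ⟨_, hH, hHσ⟩ := hσ.exists_realizesRefinement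
  hHσ.strongWc hH

theorem WadgeWinning.exists_mcts_tightens {g : X → Set (ℕ → ℕ)} {σ : Strategy}
    (hσ : WadgeWinning δX δX idRep ζ T g σ) :
    ∃ f : X → Set X, MCts δX δX f ∧ Tightens (MComp (MComp ζ T) f) g := by
  obtain ⟨H, hH, hHσ⟩ := hσ.exists_realizesRefinement
  rw [idRep_toMV_mcomp] at hHσ
  exact hHσ.exists_mcts_tightens hH

end Game

theorem wadge_game_lower_cone_general {X Y : Type} (δX : RepSpace X)
    (ζ : Y → Set (ℕ → ℕ)) (T : X → Set Y)
    (hclosed : ∀ (A B A' B' : Type) (δA : RepSpace A) (δB : RepSpace B)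
      (δA' : RepSpace A') (δB' : RepSpace B') (f : A → Set B) (g : A' → Set B'),
      (∃ σ : Strategy, WadgeWinning δX δA' δB' ζ T g σ) →
      Wc δA δB δA' δB' f g →
      ∃ σ : Strategy, WadgeWinning δX δA δB ζ T f σ) :
    (∀ (A B : Type) (δA : RepSpace A) (δB : RepSpace B) (f : A → Set B),
      (∃ σ : Strategy, WadgeWinning δX δA δB ζ T f σ) ↔
        Wc δA δB δX idRep f (MComp ζ T)) ∧
    IsCylinder δX idRep (MComp ζ T) ∧ Transparent δX idRep (MComp ζ T) := by
  have hcopy : ∃ σ, WadgeWinning δX δX idRep ζ T (MComp ζ T) σ :=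
    ⟨copyStrat, idRep_toMV_mcomp (MComp ζ T) ▸ wadgeWinning_copyStrat δX idRep ζ T⟩
  refine ⟨fun A B δA δB f => ⟨fun ⟨σ, hσ⟩ => hσ.strongWc.wc, hclosed _ _ _ _ _ _ _ _ f _ hcopy⟩,
    ?_, fun g hg => ?_⟩
  · obtain ⟨σ, hσ⟩ := hclosed _ _ _ _ _ _ _ _ _ _ hcopy (wc_idProd δX idRep (MComp ζ T))
    exact hσ.strongWc
  · obtain ⟨σ, hσ⟩ := hclosed _ _ _ _ _ _ _ _ _ _ hcopy (strongWc_mcomp_of_mcts hg).wc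
    exact hσ.exists_mcts_tightens

/-- If the class of all partial multivalued functions `f` for which player II has a
winning strategy in the `(ζ, T)`-Wadge game for `f` is closed downwards under `≤_W^c`,
then it is exactly the lower cone of `ζ ∘ T`, and `ζ ∘ T` is a cylinder and is
transparent. -/
theorem wadge_game_lower_cone {X Y : Type} (δX : RepSpace X) (δY : RepSpace Y)
    (ζ : Y → Set (ℕ → ℕ)) (hζ : IsProbe δY ζ) (T : X → Set Y)
    (hclosed : ∀ (A B A' B' : Type) (δA : RepSpace A) (δB : RepSpace B)
      (δA' : RepSpace A') (δB' : RepSpace B') (f : A → Set B) (g : A' → Set B'),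
      (∃ σ : Strategy, WadgeWinning δX δA' δB' ζ T g σ) →
      Wc δA δB δA' δB' f g →
      ∃ σ : Strategy, WadgeWinning δX δA δB ζ T f σ) :
    (∀ (A B : Type) (δA : RepSpace A) (δB : RepSpace B) (f : A → Set B),
      (∃ σ : Strategy, WadgeWinning δX δA δB ζ T f σ) ↔
        Wc δA δB δX idRep f (MComp ζ T)) ∧
    IsCylinder δX idRep (MComp ζ T) ∧ Transparent δX idRep (MComp ζ T) :=
  wadge_game_lower_cone_general δX ζ T hclosed
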